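/- Derivation of a comparison inequality: let u, v satisfy (in the weak sense) −div(A(|∇u|)∇u) + B(|∇u|) = f(u) and the analogous equation for v in Ω' ⊂ ℝᴺ, with f Lipschitz with constant L_f, and suppose there are constants C₁ > 0 and Θ ≥ 0 such that (A(|η|)η − A(|η'|)η')·(η−η') ≥ C₁ A(|η|+|η'|)|η−η'|² for all η,η' ∈ ℝᴺ and |B(|∇u|) − B(|∇v|)| ≤ Θ (|∇u|+|∇v|) A(|∇u|+|∇v|) |∇u − ∇v| pointwise. Then, setting w = (u−v)⁺ and using w as a test function, for every ϑ ∈ (0, C₁) one obtains ∫_{Ω'} A(|∇u|+|∇v|)|∇w|² dx ≤ (L_f + C(ϑ))/(C₁ − ϑ) ∫_{Ω'} w² dx, where C(ϑ) = Θ² · sup_{Ω'}((|∇u|+|∇v|)² A(|∇u|+|∇v|)) / (4ϑ). -/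

import Mathlib

/-!
Testing with `w = (u-v)⁺`, ellipticity bounds the diffusion term from below by
`C₁ ∫ A(|∇u|+|∇v|)|∇w|²`, Lipschitz continuity bounds the reaction term by `L_f ∫ w²`, and
the weighted Young inequality `ab ≤ ϑa² + b²/(4ϑ)`, applied with `a = |∇w|` and the weight
`A(|∇u|+|∇v|)`, splits the `B`-term into `ϑ ∫ A(|∇u|+|∇v|)|∇w|²`, which is absorbed on the
left since `ϑ < C₁`, and `C(ϑ) ∫ w²`.
-/

open MeasureTheory

lemma mul_le_mul_sq_add_sq_div {ϑ : ℝ} (hϑ : 0 < ϑ) (x y : ℝ) :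
    x * y ≤ ϑ * x ^ 2 + y ^ 2 / (4 * ϑ) := by
  have h := two_mul_le_add_mul_sq (a := x) (b := y) (mul_pos two_pos hϑ)
  have h4 : y ^ 2 / (4 * ϑ) = (2 * ϑ)⁻¹ * y ^ 2 / 2 := by field_simp; ring
  rw [h4]
  linarith

lemma neg_mul_le_of_abs_le_mul {b Θ t a d w S ϑ : ℝ} (hb : |b| ≤ Θ * (t * a) * d)
    (hw : 0 ≤ w) (ha : 0 ≤ a) (hS : t ^ 2 * a ≤ S) (hϑ : 0 < ϑ) :
    -(b * w) ≤ ϑ * (a * d ^ 2) + Θ ^ 2 * S / (4 * ϑ) * w ^ 2 := by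
  have hyoung : a * (d * (Θ * t * w)) ≤ a * (ϑ * d ^ 2 + (Θ * t * w) ^ 2 / (4 * ϑ)) :=
    mul_le_mul_of_nonneg_left (mul_le_mul_sq_add_sq_div hϑ _ _) ha
  calc -(b * w) ≤ |b| * w := by rw [← neg_mul]; exact mul_le_mul_of_nonneg_right (neg_le_abs b) hw
    _ ≤ Θ * (t * a) * d * w := mul_le_mul_of_nonneg_right hb hw
    _ = a * (d * (Θ * t * w)) := by ring
    _ ≤ ϑ * (a * d ^ 2) + Θ ^ 2 * w ^ 2 * (t ^ 2 * a) / (4 * ϑ) := by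
      convert hyoung using 1; ring
    _ ≤ ϑ * (a * d ^ 2) + Θ ^ 2 * S / (4 * ϑ) * w ^ 2 := by
      rw [show Θ ^ 2 * S / (4 * ϑ) * w ^ 2 = Θ ^ 2 * w ^ 2 * S / (4 * ϑ) by ring]
      gcongr

lemma nonneg_of_abs_sub_le_mul_abs_sub {f : ℝ → ℝ} {L : ℝ}
    (hf : ∀ a b, |f a - f b| ≤ L * |a - b|) : 0 ≤ L := by
  simpa using (abs_nonneg _).trans (hf 1 0)

lemma sub_mul_max_sub_zero_le {f : ℝ → ℝ} {L : ℝ} (hf : ∀ a b, |f a - f b| ≤ L * |a - b|)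
    (a b : ℝ) : (f a - f b) * max (a - b) 0 ≤ L * max (a - b) 0 ^ 2 := by
  rcases le_or_gt (a - b) 0 with hab | hab
  · simp [max_eq_right hab]
  · rw [max_eq_left hab.le]
    calc (f a - f b) * (a - b) ≤ |f a - f b| * (a - b) :=
          mul_le_mul_of_nonneg_right (le_abs_self _) hab.le
      _ ≤ L * |a - b| * (a - b) := mul_le_mul_of_nonneg_right (hf a b) hab.le
      _ = L * (a - b) ^ 2 := by rw [abs_of_pos hab]; ring

lemma integral_le_integral_of_le_of_nonneg {α : Type*} [MeasurableSpace α] {μ : Measure α}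
    {f g : α → ℝ} (hg : Integrable g μ) (hg0 : ∀ x, 0 ≤ g x) (hfg : ∀ x, f x ≤ g x) :
    ∫ x, f x ∂μ ≤ ∫ x, g x ∂μ := by
  by_cases hf : Integrable f μ
  · exact integral_mono hf hg hfg
  · rw [integral_undef hf]
    exact integral_nonneg hg0

theorem stmt9_general {α : Type*} [MeasurableSpace α] (μ : Measure α) {N : ℕ}
    (A B f : ℝ → ℝ) (u v : α → ℝ)
    (Du Dv : α → EuclideanSpace ℝ (Fin N))
    (C₁ Θ Lf ϑ S : ℝ)
    (hϑ : 0 < ϑ) (hϑC₁ : ϑ < C₁)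
    -- `w = (u-v)⁺` and its gradient `Dw = ∇u - ∇v` (on the support of `w`)
    (w : α → ℝ) (hw : w = fun x => max (u x - v x) 0)
    (Dw : α → EuclideanSpace ℝ (Fin N))
    -- the test-function identity obtained by testing both equations with `w`
    (hId : (∫ x, @inner ℝ _ _ (A ‖Du x‖ • Du x - A ‖Dv x‖ • Dv x) (Dw x) ∂μ)
        + (∫ x, (B ‖Du x‖ - B ‖Dv x‖) * w x ∂μ)
        = ∫ x, (f (u x) - f (v x)) * w x ∂μ)
    -- ellipticity of the operator
    (hell : ∀ x, C₁ * (A (‖Du x‖ + ‖Dv x‖) * ‖Dw x‖ ^ 2)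
        ≤ @inner ℝ _ _ (A ‖Du x‖ • Du x - A ‖Dv x‖ • Dv x) (Dw x))
    -- pointwise bound on the difference of the `B`-terms
    (hB : ∀ x, |B ‖Du x‖ - B ‖Dv x‖|
        ≤ Θ * ((‖Du x‖ + ‖Dv x‖) * A (‖Du x‖ + ‖Dv x‖)) * ‖Dw x‖)
    -- `f` is Lipschitz with constant `L_f`
    (hf : ∀ a b : ℝ, |f a - f b| ≤ Lf * |a - b|)
    -- `S` bounds `(|∇u|+|∇v|)² A(|∇u|+|∇v|)` on `Ω'`
    (hS : ∀ x, (‖Du x‖ + ‖Dv x‖) ^ 2 * A (‖Du x‖ + ‖Dv x‖) ≤ S)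
    (hApos : ∀ t : ℝ, 0 ≤ t → 0 ≤ A t)
    -- integrability of all the relevant quantities
    (hint1 : Integrable (fun x => A (‖Du x‖ + ‖Dv x‖) * ‖Dw x‖ ^ 2) μ)
    (hint2 : Integrable (fun x => (w x) ^ 2) μ)
    (hint3 : Integrable (fun x =>
      @inner ℝ _ _ (A ‖Du x‖ • Du x - A ‖Dv x‖ • Dv x) (Dw x)) μ)
    (hint4 : Integrable (fun x => (B ‖Du x‖ - B ‖Dv x‖) * w x) μ) :
    ∫ x, A (‖Du x‖ + ‖Dv x‖) * ‖Dw x‖ ^ 2 ∂μ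
      ≤ (Lf + Θ ^ 2 * S / (4 * ϑ)) / (C₁ - ϑ) * ∫ x, (w x) ^ 2 ∂μ := by
  subst hw
  set c := Θ ^ 2 * S / (4 * ϑ)
  have hLf : 0 ≤ Lf := nonneg_of_abs_sub_le_mul_abs_sub hf
  have hdiffusion : C₁ * ∫ x, A (‖Du x‖ + ‖Dv x‖) * ‖Dw x‖ ^ 2 ∂μ
      ≤ ∫ x, @inner ℝ _ _ (A ‖Du x‖ • Du x - A ‖Dv x‖ • Dv x) (Dw x) ∂μ := by
    rw [← integral_const_mul]
    exact integral_mono (hint1.const_mul C₁) hint3 hell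
  have hreaction : ∫ x, (f (u x) - f (v x)) * max (u x - v x) 0 ∂μ
      ≤ Lf * ∫ x, max (u x - v x) 0 ^ 2 ∂μ := by
    rw [← integral_const_mul]
    exact integral_le_integral_of_le_of_nonneg (hint2.const_mul Lf)
      (fun x => by positivity) (fun x => sub_mul_max_sub_zero_le hf _ _)
  have hlower : -∫ x, (B ‖Du x‖ - B ‖Dv x‖) * max (u x - v x) 0 ∂μ
      ≤ ϑ * (∫ x, A (‖Du x‖ + ‖Dv x‖) * ‖Dw x‖ ^ 2 ∂μ)
        + c * ∫ x, max (u x - v x) 0 ^ 2 ∂μ := by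
    rw [← integral_neg, ← integral_const_mul, ← integral_const_mul,
      ← integral_add (hint1.const_mul ϑ) (hint2.const_mul c)]
    exact integral_mono hint4.neg ((hint1.const_mul ϑ).add (hint2.const_mul c)) fun x =>
      neg_mul_le_of_abs_le_mul (hB x) (le_max_right _ _) (hApos _ (by positivity)) (hS x) hϑ
  rw [div_mul_eq_mul_div, le_div_iff₀ (sub_pos.2 hϑC₁)]
  linarith

/-- Derivation of the comparison inequality: from the test-function identity for
`w = (u-v)⁺`, the ellipticity of `A`, the pointwise bound on the `B`-difference and the
Lipschitz continuity of `f`, one deduces, for every `ϑ ∈ (0, C₁)`,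
`∫ A(|∇u|+|∇v|)|∇w|² ≤ (L_f + Θ²S/(4ϑ))/(C₁-ϑ) ∫ w²`. -/
theorem stmt9 {α : Type*} [MeasurableSpace α] (μ : Measure α) {N : ℕ}
    (A B f : ℝ → ℝ) (u v : α → ℝ)
    (Du Dv : α → EuclideanSpace ℝ (Fin N))
    (C₁ Θ Lf ϑ S : ℝ) (hC₁ : 0 < C₁) (hΘ : 0 ≤ Θ) (hLf : 0 ≤ Lf)
    (hϑ : 0 < ϑ) (hϑC₁ : ϑ < C₁)
    -- `w = (u-v)⁺` and its gradient `Dw = ∇u - ∇v` (on the support of `w`)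
    (w : α → ℝ) (hw : w = fun x => max (u x - v x) 0)
    (Dw : α → EuclideanSpace ℝ (Fin N)) (hDw : ∀ x, Dw x = Du x - Dv x)
    -- the test-function identity obtained by testing both equations with `w`
    (hId : (∫ x, @inner ℝ _ _ (A ‖Du x‖ • Du x - A ‖Dv x‖ • Dv x) (Dw x) ∂μ)
        + (∫ x, (B ‖Du x‖ - B ‖Dv x‖) * w x ∂μ)
        = ∫ x, (f (u x) - f (v x)) * w x ∂μ)
    -- ellipticity of the operator
    (hell : ∀ x, C₁ * (A (‖Du x‖ + ‖Dv x‖) * ‖Dw x‖ ^ 2)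
        ≤ @inner ℝ _ _ (A ‖Du x‖ • Du x - A ‖Dv x‖ • Dv x) (Dw x))
    -- pointwise bound on the difference of the `B`-terms
    (hB : ∀ x, |B ‖Du x‖ - B ‖Dv x‖|
        ≤ Θ * ((‖Du x‖ + ‖Dv x‖) * A (‖Du x‖ + ‖Dv x‖)) * ‖Dw x‖)
    -- `f` is Lipschitz with constant `L_f`
    (hf : ∀ a b : ℝ, |f a - f b| ≤ Lf * |a - b|)
    -- `S` bounds `(|∇u|+|∇v|)² A(|∇u|+|∇v|)` on `Ω'`
    (hS : ∀ x, (‖Du x‖ + ‖Dv x‖) ^ 2 * A (‖Du x‖ + ‖Dv x‖) ≤ S)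
    (hApos : ∀ t : ℝ, 0 ≤ t → 0 ≤ A t)
    -- integrability of all the relevant quantities
    (hint1 : Integrable (fun x => A (‖Du x‖ + ‖Dv x‖) * ‖Dw x‖ ^ 2) μ)
    (hint2 : Integrable (fun x => (w x) ^ 2) μ)
    (hint3 : Integrable (fun x =>
      @inner ℝ _ _ (A ‖Du x‖ • Du x - A ‖Dv x‖ • Dv x) (Dw x)) μ)
    (hint4 : Integrable (fun x => (B ‖Du x‖ - B ‖Dv x‖) * w x) μ) :
    ∫ x, A (‖Du x‖ + ‖Dv x‖) * ‖Dw x‖ ^ 2 ∂μ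
      ≤ (Lf + Θ ^ 2 * S / (4 * ϑ)) / (C₁ - ϑ) * ∫ x, (w x) ^ 2 ∂μ :=
  stmt9_general μ A B f u v Du Dv C₁ Θ Lf ϑ S hϑ hϑC₁ w hw Dw hId hell hB hf hS hApos hint1 hint2
    hint3 hint4
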